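/- Let q0 ∈ ℂ be a constant and let q1 : ℝ → ℂ be infinitely differentiable with q1‴ + 4 q1 q1′ = 0 on ℝ. Define s(x) = −(1/6) q1″(x) − (1/3) q1(x)² and τ(x) = (2/27) q1(x)³ − (1/36) q1′(x)² + (1/18) q1(x) q1″(x). Then for every infinitely differentiable ψ : ℝ → ℂ and every x ∈ ℝ, the Burchnall–Chaundy identity holds: P2(P2(P2ψ))(x) + s(x) (P2ψ)(x) − L3(L3ψ)(x) + 2 q0 (L3ψ)(x) − ( q0² + τ(x) ) ψ(x) = 0. That is, the commuting pair (L3, P2) satisfies P2³ + S(L3)·P2 − T(L3) = 0 with S(z) = s and T(z) = (z − q0)² + τ. -/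

import Mathlib

set_option maxHeartbeats 4000000

/-- The third-order Boussinesq Lax differential expression with constant `q₀`:
`L₃ψ = ψ''' + q₁ ψ' + ((1/2) q₁' + q₀) ψ`. -/
noncomputable def L3 (q0 : ℂ) (q1 ψ : ℝ → ℂ) : ℝ → ℂ :=
  fun x => iteratedDeriv 3 ψ x + q1 x * deriv ψ x
    + ((1 / 2 : ℂ) * deriv q1 x + q0) * ψ x

/-- The second-order differential expression `P₂ψ = ψ'' + (2/3) q₁ ψ`. -/
noncomputable def P2 (q1 ψ : ℝ → ℂ) : ℝ → ℂ :=
  fun x => iteratedDeriv 2 ψ x + (2 / 3 : ℂ) * q1 x * ψ x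

private lemma itd2 (f : ℝ → ℂ) : iteratedDeriv 2 f = deriv (deriv f) := by
  rw [iteratedDeriv_succ, iteratedDeriv_one]

private lemma itd3 (f : ℝ → ℂ) : iteratedDeriv 3 f = deriv (deriv (deriv f)) := by
  rw [iteratedDeriv_succ, itd2]

/-- The Burchnall-Chaundy identity
`P₂³ + S(L₃)·P₂ - T(L₃) = 0` with `S(z) = s` and `T(z) = (z - q₀)² + τ`
for the genus-one stationary Boussinesq pair. -/
theorem burchnall_chaundy_identity_genus_one
    (q0 : ℂ) (q1 : ℝ → ℂ) (hq1 : ContDiff ℝ (⊤ : ℕ∞) q1)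
    (hode : ∀ x : ℝ, iteratedDeriv 3 q1 x + 4 * q1 x * deriv q1 x = 0)
    (s τ : ℝ → ℂ)
    (hs : ∀ x : ℝ, s x = -(1 / 6) * iteratedDeriv 2 q1 x - (1 / 3) * (q1 x) ^ 2)
    (hτ : ∀ x : ℝ, τ x = (2 / 27) * (q1 x) ^ 3 - (1 / 36) * (deriv q1 x) ^ 2
        + (1 / 18) * q1 x * iteratedDeriv 2 q1 x) :
    ∀ ψ : ℝ → ℂ, ContDiff ℝ (⊤ : ℕ∞) ψ → ∀ x : ℝ,
      P2 q1 (P2 q1 (P2 q1 ψ)) x + s x * P2 q1 ψ x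
        - L3 q0 q1 (L3 q0 q1 ψ) x + 2 * q0 * L3 q0 q1 ψ x
        - (q0 ^ 2 + τ x) * ψ x = 0 := by
  intro ψ hψ x
  have hA0 : Differentiable ℝ (iteratedDeriv 0 ψ) := hψ.differentiable_iteratedDeriv 0 (by exact_mod_cast lt_top_iff_ne_top.mpr (by simp))
  have hA1 : Differentiable ℝ (iteratedDeriv 1 ψ) := hψ.differentiable_iteratedDeriv 1 (by exact_mod_cast lt_top_iff_ne_top.mpr (by simp))
  have hA2 : Differentiable ℝ (iteratedDeriv 2 ψ) := hψ.differentiable_iteratedDeriv 2 (WithTop.coe_lt_coe.mpr (ENat.natCast_lt_top 2))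
  have hA3 : Differentiable ℝ (iteratedDeriv 3 ψ) := hψ.differentiable_iteratedDeriv 3 (WithTop.coe_lt_coe.mpr (ENat.natCast_lt_top 3))
  have hA4 : Differentiable ℝ (iteratedDeriv 4 ψ) := hψ.differentiable_iteratedDeriv 4 (WithTop.coe_lt_coe.mpr (ENat.natCast_lt_top 4))
  have hA5 : Differentiable ℝ (iteratedDeriv 5 ψ) := hψ.differentiable_iteratedDeriv 5 (WithTop.coe_lt_coe.mpr (ENat.natCast_lt_top 5))
  have hA6 : Differentiable ℝ (iteratedDeriv 6 ψ) := hψ.differentiable_iteratedDeriv 6 (WithTop.coe_lt_coe.mpr (ENat.natCast_lt_top 6))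
  have hA7 : Differentiable ℝ (iteratedDeriv 7 ψ) := hψ.differentiable_iteratedDeriv 7 (WithTop.coe_lt_coe.mpr (ENat.natCast_lt_top 7))
  have hB0 : Differentiable ℝ (iteratedDeriv 0 q1) := hq1.differentiable_iteratedDeriv 0 (by exact_mod_cast lt_top_iff_ne_top.mpr (by simp))
  have hB1 : Differentiable ℝ (iteratedDeriv 1 q1) := hq1.differentiable_iteratedDeriv 1 (by exact_mod_cast lt_top_iff_ne_top.mpr (by simp))
  have hB2 : Differentiable ℝ (iteratedDeriv 2 q1) := hq1.differentiable_iteratedDeriv 2 (WithTop.coe_lt_coe.mpr (ENat.natCast_lt_top 2))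
  have hB3 : Differentiable ℝ (iteratedDeriv 3 q1) := hq1.differentiable_iteratedDeriv 3 (WithTop.coe_lt_coe.mpr (ENat.natCast_lt_top 3))
  have hB4 : Differentiable ℝ (iteratedDeriv 4 q1) := hq1.differentiable_iteratedDeriv 4 (WithTop.coe_lt_coe.mpr (ENat.natCast_lt_top 4))
  have hB5 : Differentiable ℝ (iteratedDeriv 5 q1) := hq1.differentiable_iteratedDeriv 5 (WithTop.coe_lt_coe.mpr (ENat.natCast_lt_top 5))
  have hq1' : Differentiable ℝ q1 := hq1.differentiable (by simp)
  have hE1d : deriv (fun x => (1 : ℂ) * (iteratedDeriv 2 ψ x) + ((2 : ℂ)/3) * (iteratedDeriv 0 ψ x * (iteratedDeriv 0 q1 x))) = (fun x => (1 : ℂ) * (iteratedDeriv 3 ψ x) + ((2 : ℂ)/3) * (iteratedDeriv 1 ψ x * (iteratedDeriv 0 q1 x)) + ((2 : ℂ)/3) * (iteratedDeriv 0 ψ x * (iteratedDeriv 1 q1 x))) := by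
    funext x
    simp (disch := fun_prop) only [deriv_fun_add, deriv_fun_mul, deriv_const_mul, deriv_const', ← iteratedDeriv_succ, Nat.reduceAdd]
    ring
  have hE1dd : deriv (fun x => (1 : ℂ) * (iteratedDeriv 3 ψ x) + ((2 : ℂ)/3) * (iteratedDeriv 1 ψ x * (iteratedDeriv 0 q1 x)) + ((2 : ℂ)/3) * (iteratedDeriv 0 ψ x * (iteratedDeriv 1 q1 x))) = (fun x => (1 : ℂ) * (iteratedDeriv 4 ψ x) + ((2 : ℂ)/3) * (iteratedDeriv 2 ψ x * (iteratedDeriv 0 q1 x)) + ((4 : ℂ)/3) * (iteratedDeriv 1 ψ x * (iteratedDeriv 1 q1 x)) + ((2 : ℂ)/3) * (iteratedDeriv 0 ψ x * (iteratedDeriv 2 q1 x))) := by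
    funext x
    simp (disch := fun_prop) only [deriv_fun_add, deriv_fun_mul, deriv_const_mul, deriv_const', ← iteratedDeriv_succ, Nat.reduceAdd]
    ring
  have hE2d : deriv (fun x => (1 : ℂ) * (iteratedDeriv 4 ψ x) + ((4 : ℂ)/3) * (iteratedDeriv 2 ψ x * (iteratedDeriv 0 q1 x)) + ((4 : ℂ)/3) * (iteratedDeriv 1 ψ x * (iteratedDeriv 1 q1 x)) + ((2 : ℂ)/3) * (iteratedDeriv 0 ψ x * (iteratedDeriv 2 q1 x)) + ((4 : ℂ)/9) * (iteratedDeriv 0 ψ x * (iteratedDeriv 0 q1 x * (iteratedDeriv 0 q1 x)))) = (fun x => (1 : ℂ) * (iteratedDeriv 5 ψ x) + ((4 : ℂ)/3) * (iteratedDeriv 3 ψ x * (iteratedDeriv 0 q1 x)) + ((8 : ℂ)/3) * (iteratedDeriv 2 ψ x * (iteratedDeriv 1 q1 x)) + (2 : ℂ) * (iteratedDeriv 1 ψ x * (iteratedDeriv 2 q1 x)) + ((4 : ℂ)/9) * (iteratedDeriv 1 ψ x * (iteratedDeriv 0 q1 x * (iteratedDeriv 0 q1 x))) + ((2 : ℂ)/3)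 * (iteratedDeriv 0 ψ x * (iteratedDeriv 3 q1 x)) + ((8 : ℂ)/9) * (iteratedDeriv 0 ψ x * (iteratedDeriv 0 q1 x * (iteratedDeriv 1 q1 x)))) := by
    funext x
    simp (disch := fun_prop) only [deriv_fun_add, deriv_fun_mul, deriv_const_mul, deriv_const', ← iteratedDeriv_succ, Nat.reduceAdd]
    ring
  have hE2dd : deriv (fun x => (1 : ℂ) * (iteratedDeriv 5 ψ x) + ((4 : ℂ)/3) * (iteratedDeriv 3 ψ x * (iteratedDeriv 0 q1 x)) + ((8 : ℂ)/3) * (iteratedDeriv 2 ψ x * (iteratedDeriv 1 q1 x)) + (2 : ℂ) * (iteratedDeriv 1 ψ x * (iteratedDeriv 2 q1 x)) + ((4 : ℂ)/9) * (iteratedDeriv 1 ψ x * (iteratedDeriv 0 q1 x * (iteratedDeriv 0 q1 x))) + ((2 : ℂ)/3) * (iteratedDeriv 0 ψ x * (iteratedDeriv 3 q1 x)) + ((8 : ℂ)/9) * (iteratedDeriv 0 ψ x * (iteratedDeriv 0 q1 x * (iteratedDeriv 1 q1 x)))) = (fun x => (1 : ℂ) * (iteratedDeriv 6 ψ x) +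 ((4 : ℂ)/3) * (iteratedDeriv 4 ψ x * (iteratedDeriv 0 q1 x)) + (4 : ℂ) * (iteratedDeriv 3 ψ x * (iteratedDeriv 1 q1 x)) + ((14 : ℂ)/3) * (iteratedDeriv 2 ψ x * (iteratedDeriv 2 q1 x)) + ((4 : ℂ)/9) * (iteratedDeriv 2 ψ x * (iteratedDeriv 0 q1 x * (iteratedDeriv 0 q1 x))) + ((8 : ℂ)/3) * (iteratedDeriv 1 ψ x * (iteratedDeriv 3 q1 x)) + ((16 : ℂ)/9) * (iteratedDeriv 1 ψ x * (iteratedDeriv 0 q1 x * (iteratedDeriv 1 q1 x))) + ((2 : ℂ)/3) * (iteratedDeriv 0 ψ x * (iteratedDeriv 4 q1 x)) + ((8 : ℂ)/9) * (iteratedDeriv 0 ψ x * (iteratedDeriv 1 q1 x * (iteratedDeriv 1 q1 x))) + ((8 : ℂ)/9) * (iteratedDeriv 0 ψ x * (iteratedDeriv 0 q1 x * (iteratedDeriv 2 q1 x)))) := by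
    funext x
    simp (disch := fun_prop) only [deriv_fun_add, deriv_fun_mul, deriv_const_mul, deriv_const', ← iteratedDeriv_succ, Nat.reduceAdd]
    ring
  have hF1d : deriv (fun x => (1 : ℂ) * (iteratedDeriv 3 ψ x) + (1 : ℂ) * (iteratedDeriv 1 ψ x * (iteratedDeriv 0 q1 x)) + ((1 : ℂ)/2) * (iteratedDeriv 0 ψ x * (iteratedDeriv 1 q1 x)) + (1 : ℂ) * (q0 * (iteratedDeriv 0 ψ x))) = (fun x => (1 : ℂ) * (iteratedDeriv 4 ψ x) + (1 : ℂ) * (iteratedDeriv 2 ψ x * (iteratedDeriv 0 q1 x)) + ((3 : ℂ)/2) * (iteratedDeriv 1 ψ x * (iteratedDeriv 1 q1 x)) + ((1 : ℂ)/2) * (iteratedDeriv 0 ψ x * (iteratedDeriv 2 q1 x)) + (1 : ℂ) * (q0 * (iteratedDeriv 1 ψ x))) := by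
    funext x
    simp (disch := fun_prop) only [deriv_fun_add, deriv_fun_mul, deriv_const_mul, deriv_const', ← iteratedDeriv_succ, Nat.reduceAdd]
    ring
  have hF1dd : deriv (fun x => (1 : ℂ) * (iteratedDeriv 4 ψ x) + (1 : ℂ) * (iteratedDeriv 2 ψ x * (iteratedDeriv 0 q1 x)) + ((3 : ℂ)/2) * (iteratedDeriv 1 ψ x * (iteratedDeriv 1 q1 x)) + ((1 : ℂ)/2) * (iteratedDeriv 0 ψ x * (iteratedDeriv 2 q1 x)) + (1 : ℂ) * (q0 * (iteratedDeriv 1 ψ x))) = (fun x => (1 : ℂ) * (iteratedDeriv 5 ψ x) + (1 : ℂ) * (iteratedDeriv 3 ψ x * (iteratedDeriv 0 q1 x)) + ((5 : ℂ)/2) * (iteratedDeriv 2 ψ x * (iteratedDeriv 1 q1 x)) + (2 : ℂ) * (iteratedDeriv 1 ψ x * (iteratedDeriv 2 q1 x)) + ((1 : ℂ)/2) * (iteratedDeriv 0 ψ x * (iteratedDeriv 3 q1 x)) + (1 : ℂ) * (q0 * (iteratedDeriv 2 ψ x))) := by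
    funext x
    simp (disch := fun_prop) only [deriv_fun_add, deriv_fun_mul, deriv_const_mul, deriv_const', ← iteratedDeriv_succ, Nat.reduceAdd]
    ring
  have hF1ddd : deriv (fun x => (1 : ℂ) * (iteratedDeriv 5 ψ x) + (1 : ℂ) * (iteratedDeriv 3 ψ x * (iteratedDeriv 0 q1 x)) + ((5 : ℂ)/2) * (iteratedDeriv 2 ψ x * (iteratedDeriv 1 q1 x)) + (2 : ℂ) * (iteratedDeriv 1 ψ x * (iteratedDeriv 2 q1 x)) + ((1 : ℂ)/2) * (iteratedDeriv 0 ψ x * (iteratedDeriv 3 q1 x)) + (1 : ℂ) * (q0 * (iteratedDeriv 2 ψ x))) = (fun x => (1 : ℂ) * (iteratedDeriv 6 ψ x) + (1 : ℂ) * (iteratedDeriv 4 ψ x * (iteratedDeriv 0 q1 x)) + ((7 : ℂ)/2) * (iteratedDeriv 3 ψ x * (iteratedDeriv 1 q1 x)) + ((9 : ℂ)/2) * (iteratedDeriv 2 ψ x * (iteratedDeriv 2 q1 x)) + ((5 : ℂ)/2) * (iteratedDeriv 1 ψ x * (iteratedDeriv 3 q1 x)) + ((1 : ℂ)/2) * (iteratedDeriv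 0 ψ x * (iteratedDeriv 4 q1 x)) + (1 : ℂ) * (q0 * (iteratedDeriv 3 ψ x))) := by
    funext x
    simp (disch := fun_prop) only [deriv_fun_add, deriv_fun_mul, deriv_const_mul, deriv_const', ← iteratedDeriv_succ, Nat.reduceAdd]
    ring
  have hP1 : P2 q1 ψ = (fun x => (1 : ℂ) * (iteratedDeriv 2 ψ x) + ((2 : ℂ)/3) * (iteratedDeriv 0 ψ x * (iteratedDeriv 0 q1 x))) := by
    funext x
    simp only [P2, iteratedDeriv_zero, iteratedDeriv_one]
    ring
  have hP2 : P2 q1 (fun x => (1 : ℂ) * (iteratedDeriv 2 ψ x) + ((2 : ℂ)/3) * (iteratedDeriv 0 ψ x * (iteratedDeriv 0 q1 x))) = (fun x => (1 : ℂ) * (iteratedDeriv 4 ψ x) + ((4 : ℂ)/3) * (iteratedDeriv 2 ψ x * (iteratedDeriv 0 q1 x)) + ((4 : ℂ)/3) * (iteratedDeriv 1 ψ x * (iteratedDeriv 1 q1 x)) + ((2 : ℂ)/3) * (iteratedDeriv 0 ψ x * (iteratedDeriv 2 q1 x)) + ((4 : ℂ)/9) * (iteratedDeriv 0 ψ x *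 (iteratedDeriv 0 q1 x * (iteratedDeriv 0 q1 x)))) := by
    funext x
    simp only [P2]
    rw [itd2, hE1d, hE1dd]
    simp only [iteratedDeriv_zero, iteratedDeriv_one]
    ring
  have hP3 : P2 q1 (fun x => (1 : ℂ) * (iteratedDeriv 4 ψ x) + ((4 : ℂ)/3) * (iteratedDeriv 2 ψ x * (iteratedDeriv 0 q1 x)) + ((4 : ℂ)/3) * (iteratedDeriv 1 ψ x * (iteratedDeriv 1 q1 x)) + ((2 : ℂ)/3) * (iteratedDeriv 0 ψ x * (iteratedDeriv 2 q1 x)) + ((4 : ℂ)/9) * (iteratedDeriv 0 ψ x * (iteratedDeriv 0 q1 x * (iteratedDeriv 0 q1 x)))) = (fun x => (1 : ℂ) * (iteratedDeriv 6 ψ x) + (2 : ℂ) * (iteratedDeriv 4 ψ x * (iteratedDeriv 0 q1 x)) + (4 : ℂ) * (iteratedDeriv 3 ψ x * (iteratedDeriv 1 q1 x)) + ((14 : ℂ)/3) * (iteratedDeriv 2 ψ x * (iteratedDeriv 2 q1 x)) + ((4 : ℂ)/3) * (iteratedDeriv 2 ψ x * (iteratedDeriv 0 q1 x * (iteratedDeriv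 0 q1 x))) + ((8 : ℂ)/3) * (iteratedDeriv 1 ψ x * (iteratedDeriv 3 q1 x)) + ((8 : ℂ)/3) * (iteratedDeriv 1 ψ x * (iteratedDeriv 0 q1 x * (iteratedDeriv 1 q1 x))) + ((2 : ℂ)/3) * (iteratedDeriv 0 ψ x * (iteratedDeriv 4 q1 x)) + ((8 : ℂ)/9) * (iteratedDeriv 0 ψ x * (iteratedDeriv 1 q1 x * (iteratedDeriv 1 q1 x))) + ((4 : ℂ)/3) * (iteratedDeriv 0 ψ x * (iteratedDeriv 0 q1 x * (iteratedDeriv 2 q1 x))) + ((8 : ℂ)/27) * (iteratedDeriv 0 ψ x * (iteratedDeriv 0 q1 x * (iteratedDeriv 0 q1 x * (iteratedDeriv 0 q1 x))))) := by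
    funext x
    simp only [P2]
    rw [itd2, hE2d, hE2dd]
    simp only [iteratedDeriv_zero, iteratedDeriv_one]
    ring
  have hL1 : L3 q0 q1 ψ = (fun x => (1 : ℂ) * (iteratedDeriv 3 ψ x) + (1 : ℂ) * (iteratedDeriv 1 ψ x * (iteratedDeriv 0 q1 x)) + ((1 : ℂ)/2) * (iteratedDeriv 0 ψ x * (iteratedDeriv 1 q1 x)) + (1 : ℂ) * (q0 * (iteratedDeriv 0 ψ x))) := by
    funext x
    simp only [L3, iteratedDeriv_zero, iteratedDeriv_one]
    ring
  have hL2 : L3 q0 q1 (fun x => (1 : ℂ) * (iteratedDeriv 3 ψ x) + (1 : ℂ) * (iteratedDeriv 1 ψ x * (iteratedDeriv 0 q1 x)) + ((1 : ℂ)/2) * (iteratedDeriv 0 ψ x * (iteratedDeriv 1 q1 x)) + (1 : ℂ) * (q0 * (iteratedDeriv 0 ψ x))) = (fun x => (1 : ℂ) * (iteratedDeriv 6 ψ x) + (2 : ℂ) * (iteratedDeriv 4 ψ x * (iteratedDeriv 0 q1 x)) + (4 : ℂ) * (iteratedDeriv 3 ψ x * (iteratedDeriv 1 q1 x)) + ((9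 : ℂ)/2) * (iteratedDeriv 2 ψ x * (iteratedDeriv 2 q1 x)) + (1 : ℂ) * (iteratedDeriv 2 ψ x * (iteratedDeriv 0 q1 x * (iteratedDeriv 0 q1 x))) + ((5 : ℂ)/2) * (iteratedDeriv 1 ψ x * (iteratedDeriv 3 q1 x)) + (2 : ℂ) * (iteratedDeriv 1 ψ x * (iteratedDeriv 0 q1 x * (iteratedDeriv 1 q1 x))) + ((1 : ℂ)/2) * (iteratedDeriv 0 ψ x * (iteratedDeriv 4 q1 x)) + ((1 : ℂ)/4) * (iteratedDeriv 0 ψ x * (iteratedDeriv 1 q1 x * (iteratedDeriv 1 q1 x))) + ((1 : ℂ)/2) * (iteratedDeriv 0 ψ x * (iteratedDeriv 0 q1 x * (iteratedDeriv 2 q1 x))) + (2 : ℂ) * (q0 * (iteratedDeriv 3 ψ x)) + (2 : ℂ) * (q0 * (iteratedDeriv 1 ψ x * (iteratedDeriv 0 q1 x))) + (1 : ℂ) * (q0 * (iteratedDeriv 0 ψ x * (iteratedDeriv 1 q1 x))) + (1 : ℂ) * (q0 * (q0 * (iteratedDeriv 0 ψ x)))) := by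
    funext x
    simp only [L3]
    rw [itd3, hF1d, hF1dd, hF1ddd]
    simp only [iteratedDeriv_zero, iteratedDeriv_one]
    ring
  have hcon : (fun x : ℝ => iteratedDeriv 3 q1 x + 4 * q1 x * deriv q1 x) = (fun _ => (0 : ℂ)) :=
    funext hode
  have hdq1 : Differentiable ℝ (deriv q1) := by
    have h := hB1; rwa [iteratedDeriv_one] at h
  have hode4 : ∀ y : ℝ, iteratedDeriv 4 q1 y + 4 * deriv q1 y * deriv q1 y
      + 4 * q1 y * iteratedDeriv 2 q1 y = 0 := by
    intro y
    have h := congrFun (congrArg deriv hcon) y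
    rw [deriv_const] at h
    simp (disch := fun_prop) only [deriv_fun_add, deriv_fun_mul, deriv_const_mul, deriv_const', ← iteratedDeriv_succ, Nat.reduceAdd] at h
    rw [show deriv (deriv q1) = iteratedDeriv 2 q1 from (itd2 q1).symm] at h
    linear_combination h
  rw [hP1, hP2, hP3, hL1, hL2, hs, hτ]
  simp only [iteratedDeriv_zero, iteratedDeriv_one]
  linear_combination (deriv ψ x / 6) * hode x + (ψ x / 6) * hode4 x
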